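/- Fix integers m, n ≥ 0 and d ≥ 1, and define f : ℂ^m × ℂ^n → ℂ by f(x,y) := Σ_{k=1}^m (2x_k + n)^d + (−1)^{d−1} Σ_{l=1}^n [ (y_l − n + 1/2)^d + (y_l − n − 1/2)^d ]. Then for every 1 ≤ k ≤ m and 1 ≤ l ≤ n and every (x,y) ∈ ℂ^m × ℂ^n lying on the hyperplane x_k + (1/2)y_l = 0, one has f(x + (1/2)e_k, y − (1/2)e_l) = f(x − (1/2)e_k, y + (1/2)e_l), where e_k and e_l denote the k-th and l-th standard unit vectors of ℂ^m and ℂ^n respectively. (This is the claim, made in the paper's proof of its theorem relating the eigenvalue polynomials to the Sergeev–Veselov shifted super Jack polynomials, that these polynomials belong to the algebra Λ^♮_{m,n,1/2} of shifted supersymmetric polynomials.) -/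
import Mathlib


/-!
STATEMENT 19: For d ≥ 1, the polynomial
f(x,y) = Σ_{k=1}^m (2x_k + n)^d + (−1)^{d−1} Σ_{l=1}^n [(y_l − n + 1/2)^d + (y_l − n − 1/2)^d]
satisfies f(x + ½e_k, y − ½e_l) = f(x − ½e_k, y + ½e_l) on every hyperplane x_k + ½y_l = 0.
-/

noncomputable section

/-- The polynomial f(x,y) = Σ_k (2x_k + n)^d + (−1)^{d−1} Σ_l [(y_l−n+1/2)^d + (y_l−n−1/2)^d]. -/
def SVpoly (m n d : ℕ) (x : Fin m → ℂ) (y : Fin n → ℂ) : ℂ :=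
  (∑ k, (2 * x k + (n : ℂ)) ^ d) +
    (-1 : ℂ) ^ (d - 1) *
      ∑ l, ((y l - (n : ℂ) + 1 / 2) ^ d + (y l - (n : ℂ) - 1 / 2) ^ d)

lemma key2 (d : ℕ) (hd : 1 ≤ d) (z : ℂ) : (-z) ^ d + (-1 : ℂ) ^ (d - 1) * z ^ d = 0 := by
  obtain ⟨e, rfl⟩ := Nat.exists_eq_add_of_le hd
  have h1 : (1 + e) - 1 = e := by omega
  have h2 : ((-1 : ℂ)) ^ (1 + e) = -(-1 : ℂ) ^ e := by rw [pow_add]; ring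
  rw [h1, neg_pow, h2]
  ring

theorem statement19 (m n d : ℕ) (hd : 1 ≤ d)
    (k : Fin m) (l : Fin n) (x : Fin m → ℂ) (y : Fin n → ℂ)
    (h : x k + (1 / 2 : ℂ) * y l = 0) :
    SVpoly m n d (x + (1 / 2 : ℂ) • (Pi.single k 1 : Fin m → ℂ)) (y - (1 / 2 : ℂ) • (Pi.single l 1 : Fin n → ℂ)) =
      SVpoly m n d (x - (1 / 2 : ℂ) • (Pi.single k 1 : Fin m → ℂ)) (y + (1 / 2 : ℂ) • (Pi.single l 1 : Fin n → ℂ)) := by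
  unfold SVpoly
  have ex : ∀ v : Fin m → ℂ, (∑ i, (2 * v i + (n : ℂ)) ^ d)
      = (2 * v k + (n : ℂ)) ^ d + ∑ i ∈ Finset.univ.erase k, (2 * v i + (n : ℂ)) ^ d :=
    fun v => (Finset.add_sum_erase _ _ (Finset.mem_univ k)).symm
  have ey : ∀ w : Fin n → ℂ, (∑ j, ((w j - (n : ℂ) + 1 / 2) ^ d + (w j - (n : ℂ) - 1 / 2) ^ d))
      = ((w l - (n : ℂ) + 1 / 2) ^ d + (w l - (n : ℂ) - 1 / 2) ^ d)
        + ∑ j ∈ Finset.univ.erase l, ((w j - (n : ℂ) + 1 / 2) ^ d + (w j - (n : ℂ) - 1 / 2) ^ d) :=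
    fun w => (Finset.add_sum_erase _ _ (Finset.mem_univ l)).symm
  rw [ex, ex, ey, ey]
  have hS : (∑ i ∈ Finset.univ.erase k,
        (2 * (x + (1 / 2 : ℂ) • (Pi.single k 1 : Fin m → ℂ)) i + (n : ℂ)) ^ d)
      = ∑ i ∈ Finset.univ.erase k,
        (2 * (x - (1 / 2 : ℂ) • (Pi.single k 1 : Fin m → ℂ)) i + (n : ℂ)) ^ d := by
    refine Finset.sum_congr rfl fun i hi => ?_
    have hik : i ≠ k := (Finset.mem_erase.mp hi).1
    simp [Pi.single_eq_of_ne hik]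
  have hT : (∑ j ∈ Finset.univ.erase l,
        (((y - (1 / 2 : ℂ) • (Pi.single l 1 : Fin n → ℂ)) j - (n : ℂ) + 1 / 2) ^ d
          + ((y - (1 / 2 : ℂ) • (Pi.single l 1 : Fin n → ℂ)) j - (n : ℂ) - 1 / 2) ^ d))
      = ∑ j ∈ Finset.univ.erase l,
        (((y + (1 / 2 : ℂ) • (Pi.single l 1 : Fin n → ℂ)) j - (n : ℂ) + 1 / 2) ^ d
          + ((y + (1 / 2 : ℂ) • (Pi.single l 1 : Fin n → ℂ)) j - (n : ℂ) - 1 / 2) ^ d) := by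
    refine Finset.sum_congr rfl fun j hj => ?_
    have hjl : j ≠ l := (Finset.mem_erase.mp hj).1
    simp [Pi.single_eq_of_ne hjl]
  rw [hS, hT]
  have hxk : (x + (1 / 2 : ℂ) • (Pi.single k 1 : Fin m → ℂ)) k = x k + 1 / 2 := by simp
  have hxk' : (x - (1 / 2 : ℂ) • (Pi.single k 1 : Fin m → ℂ)) k = x k - 1 / 2 := by simp
  have hyl : (y - (1 / 2 : ℂ) • (Pi.single l 1 : Fin n → ℂ)) l = y l - 1 / 2 := by simp
  have hyl' : (y + (1 / 2 : ℂ) • (Pi.single l 1 : Fin n → ℂ)) l = y l + 1 / 2 := by simp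
  rw [hxk, hxk', hyl, hyl']
  have e1 : 2 * (x k + 1 / 2) + (n : ℂ) = -(y l - (n : ℂ) - 1) := by linear_combination 2 * h
  have e2 : 2 * (x k - 1 / 2) + (n : ℂ) = -(y l - (n : ℂ) + 1) := by linear_combination 2 * h
  rw [e1, e2]
  have e3 : y l - 1 / 2 - (n : ℂ) + 1 / 2 = y l - (n : ℂ) := by ring
  have e4 : y l - 1 / 2 - (n : ℂ) - 1 / 2 = y l - (n : ℂ) - 1 := by ring
  have e5 : y l + 1 / 2 - (n : ℂ) + 1 / 2 = y l - (n : ℂ) + 1 := by ring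
  have e6 : y l + 1 / 2 - (n : ℂ) - 1 / 2 = y l - (n : ℂ) := by ring
  rw [e3, e4, e5, e6]
  have h1 := key2 d hd (y l - (n : ℂ) - 1)
  have h2 := key2 d hd (y l - (n : ℂ) + 1)
  linear_combination h1 - h2
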